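/- Let 0 → E' → E → E'' → 0 be an exact sequence of X-filtered R-modules with both maps bicontrolled. If both E' and E'' are insular, then E is insular. -/

import Mathlib

open Metric Set

/-- The closed metric `r`-enlargement of a subset `S` of a metric space. -/
def enl {X : Type*} [PseudoMetricSpace X] (S : Set X) (r : ℝ) : Set X :=
  {x | ∃ s ∈ S, dist x s ≤ r}

section Defs

variable {X : Type*} [PseudoMetricSpace X] (R : Type*) [Ring R]

/-- An `X`-filtered `R`-module structure on `M`: a monotone assignment of submodules
with `F ∅ = ⊥` and `F X` being the whole module. -/
def IsXFiltration {M : Type*} [AddCommGroup M] [Module R M]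
    (F : Set X → Submodule R M) : Prop :=
  Monotone F ∧ F ∅ = ⊥ ∧ F Set.univ = ⊤

/-- `F` is `D`-lean: `F(S) ⊆ ∑_{x ∈ S} F(x[D])` for every `S ⊆ X`. -/
def IsLean {M : Type*} [AddCommGroup M] [Module R M]
    (F : Set X → Submodule R M) (D : ℝ) : Prop :=
  ∀ S : Set X, F S ≤ ⨆ x ∈ S, F (closedBall x D)

/-- `F` is `δ`-scattered: `F(X) ⊆ ∑_{x ∈ X} F(x[δ])`. -/
def IsScattered {M : Type*} [AddCommGroup M] [Module R M]
    (F : Set X → Submodule R M) (δ : ℝ) : Prop :=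
  F Set.univ ≤ ⨆ x : X, F (closedBall x δ)

/-- `F` is `d`-insular: `F(S) ∩ F(U) ⊆ F(S[d] ∩ U[d])` for all `S, U ⊆ X`. -/
def IsInsular {M : Type*} [AddCommGroup M] [Module R M]
    (F : Set X → Submodule R M) (d : ℝ) : Prop :=
  ∀ S U : Set X, F S ⊓ F U ≤ F (enl S d ∩ enl U d)

/-- `F` is locally finitely generated: `F(T)` is a finitely generated `R`-module
for every bounded `T ⊆ X`. -/
def IsLocallyFG {M : Type*} [AddCommGroup M] [Module R M]
    (F : Set X → Submodule R M) : Prop :=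
  ∀ T : Set X, Bornology.IsBounded T → (F T).FG

/-- `f` is `b`-bicontrolled: `f(F(S)) ⊆ G(S[b])` and `f(F(X)) ∩ G(S) ⊆ f(F(S[b]))`
for all `S ⊆ X`. -/
def IsBicontrolled {M N : Type*} [AddCommGroup M] [Module R M]
    [AddCommGroup N] [Module R N]
    (F : Set X → Submodule R M) (G : Set X → Submodule R N)
    (f : M →ₗ[R] N) (b : ℝ) : Prop :=
  (∀ S : Set X, (F S).map f ≤ G (enl S b)) ∧
  (∀ S : Set X, (F Set.univ).map f ⊓ G S ≤ (F (enl S b)).map f)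

end Defs

/-!
Lift `x ∈ E(S) ∩ E(U)` along `g`: insularity of `E''` and the two controls of `g` give
`y ∈ E(S[c] ∩ U[c])` with `g y = g x`, where `c = 2b + d''`. Then `x - y` lies in
`E(S[c]) ∩ E(U[c])` and in `ker g = f(E')`, so insularity of `E'` and the two controls of `f`
(injectivity lets both preimages agree) put it in `E(S[c + c'] ∩ U[c + c'])` with `c' = 2b + d'`;
hence so is `x = (x - y) + y`.
-/

section Enlargement

variable {X : Type*} [PseudoMetricSpace X]

lemma subset_enl (S : Set X) {r : ℝ} (hr : 0 ≤ r) : S ⊆ enl S r :=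
  fun x hx => ⟨x, hx, by simpa using hr⟩

lemma enl_mono {S T : Set X} {r r' : ℝ} (hST : S ⊆ T) (hr : r ≤ r') : enl S r ⊆ enl T r' :=
  fun _ ⟨s, hs, hd⟩ => ⟨s, hST hs, hd.trans hr⟩

lemma enl_enl_subset (S : Set X) (a c : ℝ) : enl (enl S a) c ⊆ enl S (a + c) := by
  rintro x ⟨s, ⟨t, ht, hst⟩, hxs⟩
  exact ⟨t, ht, (dist_triangle x s t).trans (by linarith)⟩

lemma enl_inter_subset (S U : Set X) (r : ℝ) : enl (S ∩ U) r ⊆ enl S r ∩ enl U r :=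
  fun _ ⟨s, hs, hd⟩ => ⟨⟨s, hs.1, hd⟩, ⟨s, hs.2, hd⟩⟩

lemma enl_inter_enl_subset (S U : Set X) (a c : ℝ) :
    enl (enl S a ∩ enl U a) c ⊆ enl S (a + c) ∩ enl U (a + c) :=
  (enl_inter_subset _ _ c).trans <| inter_subset_inter (enl_enl_subset S a c) (enl_enl_subset U a c)

end Enlargement

section Filtered

variable {X : Type*} [PseudoMetricSpace X] {R : Type*} [Ring R]
  {M N : Type*} [AddCommGroup M] [Module R M] [AddCommGroup N] [Module R N]
  {F : Set X → Submodule R M} {G : Set X → Submodule R N}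

lemma IsInsular.inf_enl_le {d : ℝ} (hF : IsInsular R F d) (hmono : Monotone F) (S U : Set X)
    (a : ℝ) : F (enl S a) ⊓ F (enl U a) ≤ F (enl S (a + d) ∩ enl U (a + d)) :=
  (hF _ _).trans <| hmono <| inter_subset_inter (enl_enl_subset S a d) (enl_enl_subset U a d)

lemma IsBicontrolled.exists_mem_inter_enl_apply_eq {f : M →ₗ[R] N} {b d : ℝ}
    (hf : IsBicontrolled R F G f b) (hG : IsInsular R G d) (hFmono : Monotone F)
    (hGmono : Monotone G) {S U : Set X} {x : M} (hx : x ∈ F S ⊓ F U) :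
    ∃ y ∈ F (enl S (b + d + b) ∩ enl U (b + d + b)), f y = f x := by
  have hfx : f x ∈ G (enl S (b + d) ∩ enl U (b + d)) :=
    hG.inf_enl_le hGmono S U b ⟨hf.1 S ⟨x, hx.1, rfl⟩, hf.1 U ⟨x, hx.2, rfl⟩⟩
  have hx_univ : x ∈ F univ := hFmono (subset_univ S) hx.1
  obtain ⟨y, hy, hfy⟩ := hf.2 _ ⟨⟨x, hx_univ, rfl⟩, hfx⟩
  exact ⟨y, hFmono (enl_inter_enl_subset S U _ b) hy, hfy⟩

lemma IsBicontrolled.mem_inter_enl_of_mem_map {f : M →ₗ[R] N} {b d : ℝ}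
    (hf : IsBicontrolled R F G f b) (hinj : Function.Injective f) (hF : IsInsular R F d)
    (hFmono : Monotone F) (hGmono : Monotone G) {S U : Set X} {w : N}
    (hw : w ∈ (F univ).map f) (hwSU : w ∈ G S ⊓ G U) :
    w ∈ G (enl S (b + d + b) ∩ enl U (b + d + b)) := by
  obtain ⟨z, hzS, rfl⟩ := hf.2 S ⟨hw, hwSU.1⟩
  obtain ⟨z', hz'U, hz'⟩ := hf.2 U ⟨hw, hwSU.2⟩
  rw [hinj hz'] at hz'U
  have hz : z ∈ F (enl S (b + d) ∩ enl U (b + d)) := hF.inf_enl_le hFmono S U b ⟨hzS, hz'U⟩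
  exact hGmono (enl_inter_enl_subset S U _ b) (hf.1 _ ⟨z, hz, rfl⟩)

end Filtered

theorem insular_of_extension_general
    {X : Type*} [PseudoMetricSpace X] (R : Type*) [Ring R]
    {M' M M'' : Type*} [AddCommGroup M'] [Module R M'] [AddCommGroup M] [Module R M]
    [AddCommGroup M''] [Module R M'']
    (E' : Set X → Submodule R M') (E : Set X → Submodule R M)
    (E'' : Set X → Submodule R M'') (f : M' →ₗ[R] M) (g : M →ₗ[R] M'')
    (hE' : IsXFiltration R E') (hE : IsXFiltration R E) (hE'' : IsXFiltration R E'')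
    (hinj : Function.Injective f)
    (hexact : LinearMap.range f = LinearMap.ker g)
    (b : ℝ) (hb : 0 ≤ b)
    (hf : IsBicontrolled R E' E f b) (hg : IsBicontrolled R E E'' g b)
    (d' d'' : ℝ) (hd' : 0 ≤ d') (hd'' : 0 ≤ d'')
    (hins' : IsInsular R E' d') (hins'' : IsInsular R E'' d'') :
    ∃ d : ℝ, 0 ≤ d ∧ IsInsular R E d := by
  set c := b + d'' + b
  set c' := b + d' + b
  refine ⟨c + c', by positivity, fun S U x hx => ?_⟩
  obtain ⟨y, hy, hgy⟩ := hg.exists_mem_inter_enl_apply_eq hins'' hE.1 hE''.1 hx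
  have hxy_range : x - y ∈ (E' univ).map f := by
    rw [hE'.2.2, Submodule.map_top, hexact, LinearMap.mem_ker, map_sub, hgy, sub_self]
  have hxy : x - y ∈ E (enl S c) ⊓ E (enl U c) :=
    ⟨sub_mem (hE.1 (subset_enl S (by positivity)) hx.1) (hE.1 inter_subset_left hy),
      sub_mem (hE.1 (subset_enl U (by positivity)) hx.2) (hE.1 inter_subset_right hy)⟩
  have hcc' : c ≤ c + c' := le_add_of_nonneg_right (by positivity)
  have hxy' : x - y ∈ E (enl S (c + c') ∩ enl U (c + c')) :=
    hE.1 (inter_subset_inter (enl_enl_subset S c c') (enl_enl_subset U c c'))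
      (hf.mem_inter_enl_of_mem_map hinj hins' hE'.1 hE.1 hxy_range hxy)
  have hy' : y ∈ E (enl S (c + c') ∩ enl U (c + c')) :=
    hE.1 (inter_subset_inter (enl_mono subset_rfl hcc') (enl_mono subset_rfl hcc')) hy
  simpa using add_mem hxy' hy'

/-- in an exact sequence of `X`-filtered modules with bicontrolled maps,
if `E'` and `E''` are insular then `E` is insular. -/
theorem insular_of_extension
    {X : Type*} [PseudoMetricSpace X] (R : Type*) [Ring R]
    {M' M M'' : Type*} [AddCommGroup M'] [Module R M'] [AddCommGroup M] [Module R M]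
    [AddCommGroup M''] [Module R M'']
    (E' : Set X → Submodule R M') (E : Set X → Submodule R M)
    (E'' : Set X → Submodule R M'') (f : M' →ₗ[R] M) (g : M →ₗ[R] M'')
    (hE' : IsXFiltration R E') (hE : IsXFiltration R E) (hE'' : IsXFiltration R E'')
    (hinj : Function.Injective f) (hsurj : Function.Surjective g)
    (hexact : LinearMap.range f = LinearMap.ker g)
    (b : ℝ) (hb : 0 ≤ b)
    (hf : IsBicontrolled R E' E f b) (hg : IsBicontrolled R E E'' g b)
    (d' d'' : ℝ) (hd' : 0 ≤ d') (hd'' : 0 ≤ d'')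
    (hins' : IsInsular R E' d') (hins'' : IsInsular R E'' d'') :
    ∃ d : ℝ, 0 ≤ d ∧ IsInsular R E d :=
  insular_of_extension_general R E' E E'' f g hE' hE hE'' hinj hexact b hb hf hg d' d'' hd' hd''
    hins' hins''
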